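/- arXiv:math/0110006 — 2 statements merged into one kernel-verified Lean document; each statement's English description precedes it below -/
import Mathlib

section
/- For every natural number r, the Fibonacci number f_{2r+1} admits the two 5-periodic alternating Catalan-number expansions f_{2r+1} = \sum_{s \in \mathbb{Z}} C(2r+1, r+5s) and f_{2r+1} = \sum_{s \in \mathbb{Z}} C(2r+2, r+1+5s) (each sum has only finitely many nonzero terms). -/
/-- `binZ n j` is the binomial coefficient `n choose j` for `j : ℤ`, which is `0`
unless `0 ≤ j ≤ n`. -/
def binZ (n : ℕ) (j : ℤ) : ℤ := if 0 ≤ j then (n.choose j.toNat : ℤ) else 0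

/-- `catC n j = C(n,j) = binom(n,j) - binom(n,j-1)`. -/
def catC (n : ℕ) (j : ℤ) : ℤ := binZ n j - binZ n (j - 1)

lemma binZ_neg {n : ℕ} {j : ℤ} (h : j < 0) : binZ n j = 0 := by
  simp [binZ, not_le.mpr h]

lemma binZ_big {n : ℕ} {j : ℤ} (h : (n : ℤ) < j) : binZ n j = 0 := by
  have h0 : 0 ≤ j := le_trans (Int.ofNat_nonneg n) h.le
  have : n < j.toNat := by omega
  simp [binZ, h0, Nat.choose_eq_zero_of_lt this]

lemma catC_zero {n : ℕ} {j : ℤ} (h : j < 0 ∨ (n : ℤ) + 1 < j) : catC n j = 0 := by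
  rcases h with h | h
  · rw [catC, binZ_neg h, binZ_neg (by omega)]; ring
  · rw [catC, binZ_big (by omega), binZ_big (by omega)]; ring

lemma binZ_pascal (n : ℕ) (j : ℤ) : binZ (n + 1) j = binZ n j + binZ n (j - 1) := by
  rcases lt_trichotomy j 0 with h | h | h
  · rw [binZ_neg h, binZ_neg h, binZ_neg (by omega)]; ring
  · subst h; simp [binZ]
  · have h0 : 0 ≤ j := h.le
    have h1 : 0 ≤ j - 1 := by omega
    have ht : j.toNat = (j - 1).toNat + 1 := by omega
    simp only [binZ, if_pos h0, if_pos h1, ht, Nat.choose_succ_succ]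
    push_cast; ring

lemma catC_pascal (n : ℕ) (j : ℤ) : catC (n + 1) j = catC n j + catC n (j - 1) := by
  simp only [catC, binZ_pascal]; ring

noncomputable def G (n : ℕ) (a : ℤ) : ℤ := ∑ᶠ s : ℤ, catC n (a + 5 * s)

lemma hfin (n : ℕ) (a : ℤ) : (Function.support fun s : ℤ => catC n (a + 5 * s)).Finite := by
  apply Set.Finite.subset (Set.finite_Icc (-(|a| + n + 2)) (|a| + n + 2))
  intro s hs
  have h : ¬ (a + 5 * s < 0 ∨ (n : ℤ) + 1 < a + 5 * s) := fun h => hs (catC_zero h)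
  have h1 : a ≤ |a| := le_abs_self a
  have h2 : -|a| ≤ a := neg_abs_le a
  simp only [Set.mem_Icc]
  omega

lemma G_pascal (n : ℕ) (a : ℤ) : G (n + 1) a = G n a + G n (a - 1) := by
  have : G (n + 1) a = ∑ᶠ s : ℤ, (catC n (a + 5 * s) + catC n ((a - 1) + 5 * s)) := by
    apply finsum_congr; intro s
    rw [catC_pascal]
    congr 2
    ring
  rw [this, finsum_add_distrib (hfin n a) (hfin n (a - 1))]
  rfl

lemma G_per (n : ℕ) (a : ℤ) : G n (a + 5) = G n a := by
  have := finsum_comp_equiv (Equiv.addRight (1 : ℤ)) (f := fun s => catC n (a + 5 * s))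
  rw [G, G, ← this]
  apply finsum_congr; intro s
  congr 1
  simp [Equiv.coe_addRight]
  ring

lemma G_single (n : ℕ) (a : ℤ) (s0 : ℤ) (h : ∀ s ≠ s0, catC n (a + 5 * s) = 0) :
    G n a = catC n (a + 5 * s0) :=
  finsum_eq_single _ s0 h

lemma G1 : G 1 (-2) = 0 ∧ G 1 (-1) = 0 ∧ G 1 0 = 1 ∧ G 1 1 = 0 ∧ G 1 2 = -1 := by
  have hc : ∀ j : ℤ, j < 0 ∨ (2:ℤ) < j → catC 1 j = 0 := by
    intro j hj; exact catC_zero (by exact_mod_cast hj)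
  have c0 : catC 1 0 = 1 := by simp [catC, binZ]
  have c1 : catC 1 1 = 0 := by norm_num [catC, binZ]
  have c2 : catC 1 2 = -1 := by norm_num [catC, binZ]; rfl
  refine ⟨?_, ?_, ?_, ?_, ?_⟩
  · rw [G_single 1 (-2) 0 (fun s hs => hc _ (by omega))]
    exact hc _ (by norm_num)
  · rw [G_single 1 (-1) 0 (fun s hs => hc _ (by omega))]
    exact hc _ (by norm_num)
  · rw [G_single 1 0 0 (fun s hs => hc _ (by omega))]; simpa using c0
  · rw [G_single 1 1 0 (fun s hs => hc _ (by omega))]; simpa using c1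
  · rw [G_single 1 2 0 (fun s hs => hc _ (by omega))]; simpa using c2

lemma key (r : ℕ) :
    G (2 * r + 1) ((r : ℤ) - 2) = -(Nat.fib (2 * r) : ℤ) ∧
    G (2 * r + 1) ((r : ℤ) - 1) = (Nat.fib (2 * r) : ℤ) ∧
    G (2 * r + 1) ((r : ℤ)) = (Nat.fib (2 * r + 1) : ℤ) ∧
    G (2 * r + 1) ((r : ℤ) + 1) = 0 ∧
    G (2 * r + 1) ((r : ℤ) + 2) = -(Nat.fib (2 * r + 1) : ℤ) := by
  induction r with
  | zero => simpa using G1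
  | succ r ih =>
    obtain ⟨h1, h2, h3, h4, h5⟩ := ih
    set a := (r : ℤ)
    -- even level n = 2r+2
    have heven : ∀ b : ℤ, G (2 * r + 2) b = G (2 * r + 1) b + G (2 * r + 1) (b - 1) := by
      intro b
      have : 2 * r + 2 = (2 * r + 1) + 1 := by omega
      rw [this, G_pascal]
    have e3 : G (2 * r + 2) (a + 3) = -(Nat.fib (2 * r + 2) : ℤ) := by
      have hp : G (2 * r + 1) (a + 3) = G (2 * r + 1) (a - 2) := by
        have := G_per (2 * r + 1) (a - 2)
        rwa [show a - 2 + 5 = a + 3 by ring] at this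
      rw [heven, hp, h1, show a + 3 - 1 = a + 2 by ring, h5,
        show 2 * r + 2 = 2 * r + 2 by rfl]
      have := Nat.fib_add_two (n := 2 * r)
      push_cast [this]
      ring
    have em1 : G (2 * r + 2) (a - 1) = 0 := by
      rw [heven, h2, show a - 1 - 1 = a - 2 by ring, h1]; ring
    have e0 : G (2 * r + 2) a = (Nat.fib (2 * r + 2) : ℤ) := by
      rw [heven, h3, show a - 1 = a - 1 by rfl, h2]
      have := Nat.fib_add_two (n := 2 * r)
      push_cast [this]; ring
    have e1 : G (2 * r + 2) (a + 1) = (Nat.fib (2 * r + 1) : ℤ) := by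
      rw [heven, h4, show a + 1 - 1 = a by ring, h3]; ring
    have e2 : G (2 * r + 2) (a + 2) = -(Nat.fib (2 * r + 1) : ℤ) := by
      rw [heven, h5, show a + 2 - 1 = a + 1 by ring, h4]; ring
    -- odd level n = 2r+3
    have hodd : ∀ b : ℤ, G (2 * (r+1) + 1) b = G (2 * r + 2) b + G (2 * r + 2) (b - 1) := by
      intro b
      have : 2 * (r + 1) + 1 = (2 * r + 2) + 1 := by omega
      rw [this, G_pascal]
    have em2' : G (2 * r + 2) (a - 2) = -(Nat.fib (2 * r + 2) : ℤ) := by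
      have := G_per (2 * r + 2) (a - 2)
      rw [show a - 2 + 5 = a + 3 by ring] at this
      rw [← this, e3]
    have fib3 := Nat.fib_add_two (n := 2 * r + 1)
    have har : ((r : ℕ) + 1 : ℤ) = a + 1 := by push_cast [a]; ring
    refine ⟨?_, ?_, ?_, ?_, ?_⟩
    · rw [show ((r + 1 : ℕ) : ℤ) - 2 = a - 1 by push_cast; ring, hodd,
        em1, show a - 1 - 1 = a - 2 by ring, em2']
      rw [show 2 * (r + 1) = 2 * r + 2 by ring]; ring
    · rw [show ((r + 1 : ℕ) : ℤ) - 1 = a by push_cast; ring, hodd, e0,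
        show a - 1 = a - 1 by rfl, em1, show 2 * (r + 1) = 2 * r + 2 by ring]; ring
    · rw [show ((r + 1 : ℕ) : ℤ) = a + 1 by push_cast; ring, hodd, e1,
        show a + 1 - 1 = a by ring, e0, show 2 * (r + 1) + 1 = 2 * r + 1 + 2 by ring]
      push_cast [fib3]; ring
    · rw [show ((r + 1 : ℕ) : ℤ) + 1 = a + 2 by push_cast; ring, hodd, e2,
        show a + 2 - 1 = a + 1 by ring, e1]; ring
    · rw [show ((r + 1 : ℕ) : ℤ) + 2 = a + 3 by push_cast; ring, hodd, e3,
        show a + 3 - 1 = a + 2 by ring, e2, show 2 * (r + 1) + 1 = 2 * r + 1 + 2 by ring]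
      push_cast [fib3]; ring

/-- For every natural number `r`, the Fibonacci number `f_{2r+1}` admits the two
5-periodic alternating Catalan-number expansions
`f_{2r+1} = ∑_{s ∈ ℤ} C(2r+1, r+5s)` and `f_{2r+1} = ∑_{s ∈ ℤ} C(2r+2, r+1+5s)`. -/
theorem fib_odd_catalan_expansions (r : ℕ) :
    ((Nat.fib (2 * r + 1) : ℤ) = ∑ᶠ s : ℤ, catC (2 * r + 1) ((r : ℤ) + 5 * s)) ∧
    ((Nat.fib (2 * r + 1) : ℤ) = ∑ᶠ s : ℤ, catC (2 * r + 2) ((r : ℤ) + 1 + 5 * s)) := by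
  obtain ⟨h1, h2, h3, h4, h5⟩ := key r
  constructor
  · exact h3.symm
  · have heven : G (2 * r + 2) ((r : ℤ) + 1) = G (2 * r + 1) ((r : ℤ) + 1) + G (2 * r + 1) ((r : ℤ)) := by
      have h : 2 * r + 2 = (2 * r + 1) + 1 := by omega
      rw [h, G_pascal]
      congr 1
      ring_nf
    rw [show (∑ᶠ s : ℤ, catC (2 * r + 2) ((r : ℤ) + 1 + 5 * s)) = G (2 * r + 2) ((r:ℤ)+1) from rfl,
      heven, h4, h3]
    ring
end

section
/- Let p be an odd prime and c a positive integer whose digit c_0 = c \bmod p is nonzero and which has some nonzero digit c_j with j \ge 1; set k = \min\{j \ge 1 : c_j \ne 0\} and c' = c - 2c_0. Then for every finite c'-admissible set I with 0 \in I one has \delta_{c'}(I) = \delta_c(I \setminus \{0, \dots, k-1\}) + c_0. -/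
/-- `digit p c i` is the `i`-th base-`p` digit of `c`. -/
def digit (p c i : ℕ) : ℕ := c / p ^ i % p

/-- A finite set `I ⊆ ℕ` is `c`-admissible (for the base-`p` digits of `c`) if
(a) for every `i ∈ I` with `i = 0` or `i-1 ∉ I` one has `c_i ≠ 0`, and
(b) for every `i ∉ I` with `i ≥ 1` and `i-1 ∈ I` one has `c_i ≠ p-1`. -/
def IsAdmissible (p c : ℕ) (I : Finset ℕ) : Prop :=
  (∀ i ∈ I, (i = 0 ∨ i - 1 ∉ I) → digit p c i ≠ 0) ∧
  (∀ i : ℕ, i ∉ I → 1 ≤ i → i - 1 ∈ I → digit p c i ≠ p - 1)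

/-- `δ_c(I) = ∑_{i ∈ I} (p-1-c_i) p^i + ∑_{i ∈ I, i=0 ∨ i-1 ∉ I} p^i`. -/
def deltaC (p c : ℕ) (I : Finset ℕ) : ℕ :=
  (∑ i ∈ I, (p - 1 - digit p c i) * p ^ i) +
    ∑ i ∈ I.filter (fun i => i = 0 ∨ i - 1 ∉ I), p ^ i

/-!
Write `c = c₀ + p^k M` with `M = c / p^k`, so that `c - 2c₀ = (p^k - c₀) + p^k (M - 1)`:
subtracting `2c₀` borrows through the zero digits `1, …, k-1`, hence `c - 2c₀` has digits
`p - c₀` at `0`, `p - 1` at `1, …, k-1`, `c_k - 1` at `k`, and the digits of `c` above `k`.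
Admissibility forbids a run of `I` from ending just before a digit `p - 1`, so `{0, …, k-1} ⊆ I`.
This block contributes `c₀ - 1` to the first sum of `δ` and one run start, at `0`, to the
second. The decremented digit at `k` adds `p^k` to the first sum exactly when `k ∈ I`, and this
is paid back by `k` becoming a run start once the block is removed.
-/

open Finset

section Digits

variable {p : ℕ}

theorem digit_zero (m : ℕ) : digit p m 0 = m % p := by
  simp [digit]

theorem digit_div_pow (m k i : ℕ) : digit p (m / p ^ k) i = digit p m (k + i) := by
  simp only [digit, Nat.div_div_eq_div_mul, pow_add]

theorem digit_add_pow_mul_of_lt (hp : 0 < p) {k i : ℕ} (a m : ℕ) (hi : i < k) :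
    digit p (a + p ^ k * m) i = digit p a i := by
  have hpow : p ^ k * m = p ^ i * (p * (p ^ (k - i - 1) * m)) := by
    rw [← mul_assoc, ← mul_assoc, ← pow_succ, ← pow_add]
    congr 2
    omega
  rw [digit, digit, hpow, Nat.add_mul_div_left _ _ (pow_pos hp i), Nat.add_mul_mod_self_left]

theorem digit_add_pow_mul_of_le {a k i : ℕ} (m : ℕ) (ha : a < p ^ k) (hi : k ≤ i) :
    digit p (a + p ^ k * m) i = digit p m (i - k) := by
  have hpow : p ^ i = p ^ k * p ^ (i - k) := by rw [← pow_add, Nat.add_sub_cancel' hi]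
  rw [digit, digit, hpow, ← Nat.div_div_eq_div_mul,
    Nat.add_mul_div_left _ _ (Nat.zero_lt_of_lt ha), Nat.div_eq_of_lt ha, zero_add]

theorem digit_pow_sub_zero {a k : ℕ} (hk : k ≠ 0) (ha0 : 0 < a) (ha : a ≤ p) :
    digit p (p ^ k - a) 0 = p - a := by
  have hpk : p ^ k = p * p ^ (k - 1) := by rw [← pow_succ', Nat.sub_add_cancel (by omega)]
  have hpos : 0 < p ^ (k - 1) := pow_pos (by omega) _
  have hsplit : p ^ k - a = (p - a) + p ^ 1 * (p ^ (k - 1) - 1) := by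
    rw [pow_one, Nat.mul_sub_one, hpk]
    have : p ≤ p * p ^ (k - 1) := Nat.le_mul_of_pos_right p hpos
    omega
  rw [hsplit, digit_add_pow_mul_of_lt (by omega) _ _ Nat.one_pos, digit_zero,
    Nat.mod_eq_of_lt (by omega)]

theorem digit_pow_sub {a k i : ℕ} (hp : 0 < p) (ha0 : 0 < a) (ha : a ≤ p ^ i) (hik : i < k) :
    digit p (p ^ k - a) i = p - 1 := by
  have hpk : p ^ k = p ^ i * p ^ (k - i) := by rw [← pow_add, Nat.add_sub_cancel' hik.le]
  have hpos : 0 < p ^ (k - i) := pow_pos hp _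
  have hsplit : p ^ k - a = (p ^ i - a) + p ^ i * (p ^ (k - i) - 1) := by
    rw [Nat.mul_sub_one, hpk]
    have : p ^ i ≤ p ^ i * p ^ (k - i) := Nat.le_mul_of_pos_right _ hpos
    omega
  rw [hsplit, digit_add_pow_mul_of_le _ (by omega) le_rfl, Nat.sub_self,
    digit_pow_sub_zero (by omega) Nat.one_pos hp]

theorem sub_one_eq_of_mod_ne_zero {m : ℕ} (h : m % p ≠ 0) :
    m - 1 = (m % p - 1) + p * (m / p) := by
  have := Nat.mod_add_div m p
  omega

theorem digit_sub_one_zero {m : ℕ} (h : digit p m 0 ≠ 0) :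
    digit p (m - 1) 0 = digit p m 0 - 1 := by
  simp only [digit_zero] at h ⊢
  rcases p.eq_zero_or_pos with rfl | hp
  · simp
  · have := Nat.mod_lt m hp
    rw [sub_one_eq_of_mod_ne_zero h, Nat.add_mul_mod_self_left, Nat.mod_eq_of_lt (by omega)]

theorem digit_sub_one_of_ne_zero {m i : ℕ} (h : digit p m 0 ≠ 0) (hi : i ≠ 0) :
    digit p (m - 1) i = digit p m i := by
  obtain ⟨j, rfl⟩ : ∃ j, i = 1 + j := ⟨i - 1, by omega⟩
  have hdiv : (m - 1) / p = m / p := by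
    rw [digit_zero] at h
    rcases p.eq_zero_or_pos with rfl | hp
    · simp
    · have := Nat.mod_lt m hp
      rw [sub_one_eq_of_mod_ne_zero h, Nat.add_mul_div_left _ _ hp, Nat.div_eq_of_lt (by omega),
        zero_add]
  rw [← digit_div_pow, ← digit_div_pow, pow_one, hdiv]

theorem mod_pow_eq_mod_of_digit_eq_zero {c k : ℕ} (hk : k ≠ 0)
    (h : ∀ j, 1 ≤ j → j < k → digit p c j = 0) : c % p ^ k = c % p := by
  induction k with
  | zero => exact absurd rfl hk
  | succ n ih =>
    rcases Nat.eq_zero_or_pos n with rfl | hn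
    · rw [zero_add, pow_one]
    · rw [Nat.mod_pow_succ, ← digit, h n hn (by omega), mul_zero, add_zero,
        ih hn.ne' fun j hj hjn => h j hj (by omega)]

end Digits

theorem range_subset_of_isAdmissible {p c k : ℕ} {I : Finset ℕ} (hI : IsAdmissible p c I)
    (h0 : 0 ∈ I) (hmid : ∀ i, 1 ≤ i → i < k → digit p c i = p - 1) : range k ⊆ I := by
  intro i hi
  induction i with
  | zero => exact h0
  | succ n ih =>
    have hnk : n + 1 < k := mem_range.1 hi
    by_contra hn
    exact hI.2 (n + 1) hn (by omega) (ih (mem_range.2 (by omega))) (hmid _ (by omega) hnk)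

def runStarts (I : Finset ℕ) : Finset ℕ := I.filter fun i => i = 0 ∨ i - 1 ∉ I

theorem runStarts_of_range_subset {k : ℕ} {I : Finset ℕ} (hk : k ≠ 0) (hI : range k ⊆ I) :
    runStarts I = insert 0 ((runStarts (I \ range k)).erase k) := by
  have hI' : ∀ j, j < k → j ∈ I := fun j hj => hI (mem_range.2 hj)
  ext i
  simp only [runStarts, mem_filter, mem_insert, mem_erase, mem_sdiff, mem_range]
  grind

theorem sum_runStarts_of_range_subset {M : Type*} [AddCommMonoid M] (f : ℕ → M) {k : ℕ}
    {I : Finset ℕ} (hk : k ≠ 0) (hI : range k ⊆ I) :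
    ∑ i ∈ runStarts I, f i + (if k ∈ I then f k else 0) =
      f 0 + ∑ i ∈ runStarts (I \ range k), f i := by
  have h0 : 0 ∉ (runStarts (I \ range k)).erase k := by
    simp [runStarts, hk]
  rw [runStarts_of_range_subset hk hI, sum_insert h0, add_assoc]
  congr 1
  split_ifs with hkI
  · rw [add_comm, add_sum_erase]
    simp [runStarts, hkI, Nat.pos_of_ne_zero hk]
  · rw [add_zero, erase_eq_of_notMem]
    simp [runStarts, hkI]

theorem deltaC_eq_deltaC_sdiff_range_add {p c c' k c₀ : ℕ} {I : Finset ℕ} (hp : 0 < p)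
    (hk : k ≠ 0) (hI : range k ⊆ I) (hc₀ : 0 < c₀) (h0 : digit p c' 0 + c₀ = p)
    (hmid : ∀ i, 1 ≤ i → i < k → digit p c' i = p - 1) (hck : digit p c' k + 1 = digit p c k)
    (hhigh : ∀ i, k < i → digit p c' i = digit p c i) :
    deltaC p c' I = deltaC p c (I \ range k) + c₀ := by
  have hlow : ∑ i ∈ range k, (p - 1 - digit p c' i) * p ^ i = c₀ - 1 := by
    rw [sum_eq_single_of_mem 0 (mem_range.2 (Nat.pos_of_ne_zero hk))]
    · simp only [pow_zero, mul_one]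
      omega
    · intro i hi hi0
      rw [hmid i (by omega) (mem_range.1 hi), Nat.sub_self, zero_mul]
  have hterm : ∀ i ∈ I \ range k, (p - 1 - digit p c' i) * p ^ i =
      (p - 1 - digit p c i) * p ^ i + if i = k then p ^ k else 0 := by
    intro i hi
    have hki : k ≤ i := by simpa using (mem_sdiff.1 hi).2
    rcases hki.eq_or_lt with rfl | hki
    · have hckp : digit p c k < p := Nat.mod_lt _ hp
      rw [if_pos rfl, show p - 1 - digit p c' k = p - 1 - digit p c k + 1 by omega, add_mul,
        one_mul]
    · rw [hhigh i hki, if_neg hki.ne', add_zero]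
  have hhighsum : ∑ i ∈ I \ range k, (p - 1 - digit p c' i) * p ^ i =
      ∑ i ∈ I \ range k, (p - 1 - digit p c i) * p ^ i + if k ∈ I then p ^ k else 0 := by
    rw [sum_congr rfl hterm, sum_add_distrib, sum_ite_eq']
    simp [mem_sdiff]
  have hstarts := sum_runStarts_of_range_subset (fun i => p ^ i) hk hI
  rw [runStarts, runStarts, pow_zero] at hstarts
  rw [deltaC, deltaC, ← sum_sdiff hI]
  omega

theorem delta_of_admissible_bijection_general (p : ℕ) (hp : p.Prime)
    (c : ℕ) (hc0 : digit p c 0 ≠ 0)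
    (k : ℕ) (hk1 : 1 ≤ k) (hk2 : digit p c k ≠ 0)
    (hkmin : ∀ j, 1 ≤ j → j < k → digit p c j = 0) :
    ∀ I : Finset ℕ, IsAdmissible p (c - 2 * digit p c 0) I → 0 ∈ I →
      deltaC p (c - 2 * digit p c 0) I = deltaC p c (I \ Finset.range k) + digit p c 0 := by
  intro I hI h0I
  have hp0 : 0 < p := hp.pos
  have hc₀p : digit p c 0 < p := Nat.mod_lt _ hp0
  have hpk : p ≤ p ^ k := Nat.le_self_pow (by omega) p
  set M := c / p ^ k with hM
  have hMk : digit p M 0 = digit p c k := by rw [digit_div_pow, add_zero]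
  have hM0 : M ≠ 0 := by
    rintro hM0
    rw [← hMk, hM0] at hk2
    simp [digit] at hk2
  have hc : c = digit p c 0 + p ^ k * M := by
    rw [digit_zero, ← mod_pow_eq_mod_of_digit_eq_zero (by omega) hkmin, Nat.mod_add_div]
  have hc' : c - 2 * digit p c 0 = (p ^ k - digit p c 0) + p ^ k * (M - 1) := by
    have := Nat.le_mul_of_pos_right (p ^ k) (Nat.pos_of_ne_zero hM0)
    rw [Nat.mul_sub_one]
    omega
  have hlt : p ^ k - digit p c 0 < p ^ k := by omega
  have hmid : ∀ i, 1 ≤ i → i < k → digit p (c - 2 * digit p c 0) i = p - 1 := fun i hi hik => by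
    rw [hc', digit_add_pow_mul_of_lt hp0 _ _ hik, digit_pow_sub hp0 (Nat.pos_of_ne_zero hc0)
      (hc₀p.le.trans (Nat.le_self_pow (by omega) p)) hik]
  refine deltaC_eq_deltaC_sdiff_range_add hp0 (by omega)
    (range_subset_of_isAdmissible hI h0I hmid) (Nat.pos_of_ne_zero hc0) ?_ hmid ?_ fun i hi => ?_
  · rw [hc', digit_add_pow_mul_of_lt hp0 _ _ (by omega),
      digit_pow_sub_zero (by omega) (Nat.pos_of_ne_zero hc0) hc₀p.le]
    omega
  · rw [hc', digit_add_pow_mul_of_le _ hlt le_rfl, Nat.sub_self, digit_sub_one_zero (hMk ▸ hk2),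
      hMk]
    omega
  · rw [hc', digit_add_pow_mul_of_le _ hlt hi.le, digit_sub_one_of_ne_zero (hMk ▸ hk2) (by omega),
      hM, digit_div_pow, Nat.add_sub_cancel' hi.le]

/-- Let `p` be an odd prime and `c` a positive integer with `c₀ = c mod p ≠ 0` having a
nonzero digit `c_j`, `j ≥ 1`; let `k` be minimal such `j` and `c' = c - 2c₀`. Then for
every finite `c'`-admissible set `I` with `0 ∈ I`,
`δ_{c'}(I) = δ_c(I \ {0,…,k-1}) + c₀`. -/
theorem delta_of_admissible_bijection (p : ℕ) (hp : p.Prime) (hodd : Odd p)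
    (c : ℕ) (hc : 0 < c) (hc0 : digit p c 0 ≠ 0)
    (k : ℕ) (hk1 : 1 ≤ k) (hk2 : digit p c k ≠ 0)
    (hkmin : ∀ j, 1 ≤ j → j < k → digit p c j = 0) :
    ∀ I : Finset ℕ, IsAdmissible p (c - 2 * digit p c 0) I → 0 ∈ I →
      deltaC p (c - 2 * digit p c 0) I = deltaC p c (I \ Finset.range k) + digit p c 0 :=
  delta_of_admissible_bijection_general p hp c hc0 k hk1 hk2 hkmin
end
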